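/- arXiv:1401.2794 — 2 statements merged into one kernel-verified Lean document; each statement's English description precedes it below -/
import Mathlib

section
/- Let C be an [n,k] code over F_p and G a generator matrix in standard form with rows g_i = e_i − m_i (so m_i is supported in coordinates k+1,…,n). Then the set {x_i − x^{m_i} : 1 ≤ i ≤ k} ∪ {x_i^p − 1 : k+1 ≤ i ≤ n} generates the code ideal I(C) and is the reduced Gröbner basis of I(C) with respect to the lexicographic order x_1 ≻ x_2 ≻ … ≻ x_n. -/
/-!
Modulo the ideal `I` spanned by the proposed basis, `x_i ≡ x^{m_i}` for `i ≤ k` and `x_j ^ p ≡ 1`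
for all `j`, so `c ↦ x^c` is a homomorphism from `F_p^n` to the units of `K[x]/I` that kills every
`g_i`, hence all of `C`; thus `x^a ≡ x^b` whenever `a - b ∈ C`, and `I = I(C)`.

For the Gröbner property, send `x_j` to `t^{m_j}` (`j ≤ k`) resp. `t^{e_j}` (`j > k`) in the group
algebra `K[F_p^n]`. This kills `I`. A standard exponent `d` (no `x_i` with `i ≤ k`, all other
exponents `< p`) is recovered from its image word, and every other monomial with the same image is
lexicographically larger. So the leading coefficient of `f ∈ I` would survive in the image if its
leading exponent were standard: every leading monomial of `I` is divisible by one of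
`x_1, …, x_k, x_{k+1}^p, …, x_n^p`. Reducedness holds because all trailing terms are standard.
-/

open MvPolynomial

/-- Exponent vector in ℕ^n of a word over F_p, entries read in {0,…,p−1}. -/
noncomputable def toExp {p n : ℕ} (c : Fin n → ZMod p) : Fin n →₀ ℕ :=
  Finsupp.equivFunOnFinite.symm fun i => (c i).val

/-- The code ideal I(C) = ⟨x^a − x^b : a − b ∈ C⟩ + ⟨x_i^p − 1⟩. -/
noncomputable def codeIdeal (p : ℕ) (K : Type*) [Field K] {n : ℕ}
    (C : Submodule (ZMod p) (Fin n → ZMod p)) : Ideal (MvPolynomial (Fin n) K) :=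
  Ideal.span
    ({f | ∃ a b : Fin n → ZMod p, a - b ∈ C ∧
        f = monomial (toExp a) (1 : K) - monomial (toExp b) 1} ∪
     {f | ∃ i : Fin n, f = X i ^ p - 1})

/-- `d` is the leading exponent of `f` w.r.t. the monomial order `le`. -/
def IsLeadExp {σ K : Type*} [CommSemiring K] (le : (σ →₀ ℕ) → (σ →₀ ℕ) → Prop)
    (f : MvPolynomial σ K) (d : σ →₀ ℕ) : Prop :=
  d ∈ f.support ∧ ∀ e ∈ f.support, le e d

/-- Leading ideal of `I` w.r.t. the monomial order `le`. -/
noncomputable def leadIdeal {σ K : Type*} [CommSemiring K]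
    (le : (σ →₀ ℕ) → (σ →₀ ℕ) → Prop) (I : Ideal (MvPolynomial σ K)) :
    Ideal (MvPolynomial σ K) :=
  Ideal.span {q | ∃ f ∈ I, ∃ d, IsLeadExp le f d ∧ q = monomial d (1 : K)}

/-- `G` is a Gröbner basis of `I`: G ⊆ I and the leading terms of G generate the
leading ideal of I. -/
def IsGroebnerBasis {σ K : Type*} [CommSemiring K]
    (le : (σ →₀ ℕ) → (σ →₀ ℕ) → Prop) (G : Set (MvPolynomial σ K))
    (I : Ideal (MvPolynomial σ K)) : Prop :=
  G ⊆ (I : Set (MvPolynomial σ K)) ∧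
    leadIdeal le I = Ideal.span {q | ∃ g ∈ G, ∃ d, IsLeadExp le g d ∧ q = monomial d (1 : K)}

/-- `G` is the reduced Gröbner basis of `I`: a Gröbner basis, all elements monic,
and no term of any element is divisible by the leading term of another element. -/
def IsReducedGroebnerBasis {σ K : Type*} [CommSemiring K]
    (le : (σ →₀ ℕ) → (σ →₀ ℕ) → Prop) (G : Set (MvPolynomial σ K))
    (I : Ideal (MvPolynomial σ K)) : Prop :=
  IsGroebnerBasis le G I ∧
    (∀ g ∈ G, ∀ d, IsLeadExp le g d → MvPolynomial.coeff d g = 1) ∧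
    (∀ g ∈ G, ∀ h ∈ G, g ≠ h → ∀ d, IsLeadExp le g d → ∀ e ∈ h.support, ¬ d ≤ e)

/-- The lexicographic monomial order with x_1 ≻ x_2 ≻ … ≻ x_n. -/
def lexLe {n : ℕ} (a b : Fin n →₀ ℕ) : Prop := toLex a ≤ toLex b

theorem toExp_single {p n : ℕ} [Fact (1 < p)] (j : Fin n) :
    toExp (Pi.single j (1 : ZMod p)) = Finsupp.single j 1 := by
  ext m
  simp [toExp, Pi.single_apply, Finsupp.single_apply, eq_comm, apply_ite ZMod.val, ZMod.val_one]

section LeadingExponents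

variable {n : ℕ} {K : Type*} [CommRing K]

theorem IsLeadExp.unique {f : MvPolynomial (Fin n) K} {d d' : Fin n →₀ ℕ}
    (h : IsLeadExp lexLe f d) (h' : IsLeadExp lexLe f d') : d = d' :=
  toLex.injective (le_antisymm (h'.2 d h.1) (h.2 d' h'.1))

theorem toLex_lt_toLex_single {e : Fin n →₀ ℕ} {j : Fin n} {x : ℕ}
    (he : ∀ m ≤ j, e m = 0) (hx : 0 < x) : toLex e < toLex (Finsupp.single j x) :=
  Finsupp.lex_def.2 ⟨j, fun m hm => by simp [he m hm.le, hm.ne'],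
    by simpa [he j le_rfl] using hx⟩

theorem mem_support_monomial_sub_monomial {a b e : Fin n →₀ ℕ}
    (he : e ∈ (monomial a (1 : K) - monomial b 1).support) : e = a ∨ e = b := by
  classical
  simpa using (support_sub _ _ _).trans
    (Finset.union_subset_union support_monomial_subset support_monomial_subset) he

theorem coeff_monomial_sub_monomial_self {a b : Fin n →₀ ℕ} (hab : a ≠ b) :
    coeff a (monomial a (1 : K) - monomial b 1) = 1 := by
  simp [coeff_monomial, hab.symm]

theorem isLeadExp_monomial_sub_monomial [Nontrivial K] {a b : Fin n →₀ ℕ}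
    (h : toLex b < toLex a) : IsLeadExp lexLe (monomial a (1 : K) - monomial b 1) a := by
  refine ⟨?_, fun e he => ?_⟩
  · rw [mem_support_iff, coeff_monomial_sub_monomial_self fun hab => h.ne (by rw [hab])]
    exact one_ne_zero
  · rcases mem_support_monomial_sub_monomial he with rfl | rfl
    exacts [le_rfl, h.le]

end LeadingExponents

theorem isGroebnerBasis_of_forall_isLeadExp {σ K : Type*} [CommSemiring K]
    {le : (σ →₀ ℕ) → (σ →₀ ℕ) → Prop} {G : Set (MvPolynomial σ K)} {I : Ideal (MvPolynomial σ K)}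
    (hGI : G ⊆ I)
    (h : ∀ f ∈ I, ∀ d, IsLeadExp le f d → ∃ g ∈ G, ∃ d', IsLeadExp le g d' ∧ d' ≤ d) :
    IsGroebnerBasis le G I := by
  refine ⟨hGI, le_antisymm ?_ (Ideal.span_mono ?_)⟩
  · refine Ideal.span_le.2 ?_
    rintro _ ⟨f, hf, d, hd, rfl⟩
    obtain ⟨g, hg, d', hd', hle⟩ := h f hf d hd
    have hdvd : monomial d (1 : K) = monomial d' 1 * monomial (d - d') 1 := by
      rw [monomial_mul, one_mul, add_tsub_cancel_of_le hle]
    rw [hdvd]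
    exact Ideal.mul_mem_right _ _ (Ideal.subset_span ⟨g, hg, d', hd', rfl⟩)
  · rintro _ ⟨g, hg, d, hd, rfl⟩
    exact ⟨g, hGI hg, d, hd, rfl⟩

section PowVal

variable {ι R : Type*} [Fintype ι] [CommMonoid R] {p : ℕ} {u : ι → R}

def powVal (u : ι → R) (c : ι → ZMod p) : R := ∏ j, u j ^ (c j).val

theorem powVal_zero : powVal u (0 : ι → ZMod p) = 1 := by
  simp [powVal]

theorem powVal_add [NeZero p] (hu : ∀ j, u j ^ p = 1) (a b : ι → ZMod p) :
    powVal u (a + b) = powVal u a * powVal u b := by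
  simp only [powVal, ← Finset.prod_mul_distrib, Pi.add_apply, ZMod.val_add, ← pow_add]
  refine Finset.prod_congr rfl fun j _ => ?_
  conv_rhs => rw [← Nat.div_add_mod ((a j).val + (b j).val) p, pow_add, pow_mul, hu, one_pow,
    one_mul]

theorem powVal_eq_powVal_iff [NeZero p] (hu : ∀ j, u j ^ p = 1) {a b : ι → ZMod p} :
    powVal u a = powVal u b ↔ powVal u (a - b) = 1 := by
  have hunit : powVal u b * powVal u (-b) = 1 := by rw [← powVal_add hu, add_neg_cancel, powVal_zero]
  constructor
  · intro h
    rw [sub_eq_add_neg, powVal_add hu, h, hunit]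
  · intro h
    rw [← sub_add_cancel a b, powVal_add hu, h, one_mul]

theorem powVal_eq_one_of_mem_span [NeZero p] (hu : ∀ j, u j ^ p = 1) {s : Set (ι → ZMod p)}
    (hs : ∀ c ∈ s, powVal u c = 1) {c : ι → ZMod p} (hc : c ∈ Submodule.span (ZMod p) s) :
    powVal u c = 1 := by
  induction hc using Submodule.span_induction with
  | mem c hc => exact hs c hc
  | zero => exact powVal_zero
  | add a b _ _ ha hb => rw [powVal_add hu, ha, hb, one_mul]
  | smul r c _ hc =>
    rw [← ZMod.natCast_zmod_val r, Nat.cast_smul_eq_nsmul]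
    induction r.val with
    | zero => rw [zero_smul, powVal_zero]
    | succ m ih => rw [succ_nsmul, powVal_add hu, ih, hc, one_mul]

theorem powVal_single [Fact (1 < p)] [DecidableEq ι] (j : ι) :
    powVal u (Pi.single j (1 : ZMod p)) = u j := by
  rw [powVal, Finset.prod_eq_single j (fun t _ ht => by simp [ht]) (by simp)]
  simp [ZMod.val_one]

end PowVal

theorem map_monomial_toExp {n p : ℕ} {K R : Type*} [CommSemiring K] [CommSemiring R]
    (f : MvPolynomial (Fin n) K →+* R) (c : Fin n → ZMod p) :
    f (monomial (toExp c) 1) = powVal (fun j => f (X j)) c := by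
  rw [monomial_eq, Finsupp.prod_fintype _ _ fun _ => pow_zero _]
  simp [powVal, toExp, map_prod]

def leadDeg (p k : ℕ) {n : ℕ} (j : Fin n) : ℕ := if (j : ℕ) < k then 1 else p

/-- Exponents divisible by none of the leading monomials `x_j ^ leadDeg p k j` of `codeBasis`. -/
def IsStandardExp (p k : ℕ) {n : ℕ} (d : Fin n →₀ ℕ) : Prop := ∀ j, d j < leadDeg p k j

section StandardForm

variable {p n k : ℕ} (M : Fin k → Fin n → ZMod p)

noncomputable def tailExp (j : Fin n) : Fin n →₀ ℕ :=
  if h : (j : ℕ) < k then toExp (M ⟨j, h⟩) else 0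

/-- `x_j - x^{m_j}` for `j < k` and `x_j ^ p - 1` for `j ≥ k`. -/
noncomputable def codeBasis (K : Type*) [CommRing K] (j : Fin n) : MvPolynomial (Fin n) K :=
  monomial (Finsupp.single j (leadDeg p k j)) 1 - monomial (tailExp M j) 1

variable {M}

theorem range_codeBasis (K : Type*) [CommRing K] (hk : k ≤ n) :
    Set.range (codeBasis M K) =
      {f | ∃ i : Fin k, f = X (Fin.castLE hk i) - monomial (toExp (M i)) (1 : K)} ∪
        {f | ∃ i : Fin n, k ≤ (i : ℕ) ∧ f = X i ^ p - 1} := by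
  ext f
  constructor
  · rintro ⟨j, rfl⟩
    by_cases hj : (j : ℕ) < k
    · exact Or.inl ⟨⟨j, hj⟩, by simp [codeBasis, leadDeg, tailExp, hj, X]⟩
    · exact Or.inr ⟨j, not_lt.1 hj, by simp [codeBasis, leadDeg, tailExp, hj, X_pow_eq_monomial]⟩
  · rintro (⟨i, rfl⟩ | ⟨j, hj, rfl⟩)
    · exact ⟨Fin.castLE hk i, by simp [codeBasis, leadDeg, tailExp, X]⟩
    · exact ⟨j, by simp [codeBasis, leadDeg, tailExp, not_lt.2 hj, X_pow_eq_monomial]⟩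

theorem leadDeg_pos [NeZero p] (j : Fin n) : 0 < leadDeg p k j := by
  unfold leadDeg
  split_ifs
  exacts [one_pos, Nat.pos_of_neZero p]

theorem exists_single_leadDeg_le_of_not_isStandardExp {d : Fin n →₀ ℕ}
    (h : ¬ IsStandardExp p k d) : ∃ j, Finsupp.single j (leadDeg p k j) ≤ d := by
  simpa [IsStandardExp, Finsupp.single_le_iff] using h

theorem not_single_leadDeg_le_of_isStandardExp {d : Fin n →₀ ℕ} (h : IsStandardExp p k d)
    (j : Fin n) : ¬ Finsupp.single j (leadDeg p k j) ≤ d := by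
  simpa [Finsupp.single_le_iff] using h j

variable (hM : ∀ (i : Fin k) (j : Fin n), (j : ℕ) < k → M i j = 0)
include hM

theorem tailExp_apply_of_le {j m : Fin n} (hm : m ≤ j) : tailExp M j m = 0 := by
  unfold tailExp
  split_ifs with hj
  · simp [toExp, hM _ m (lt_of_le_of_lt hm hj)]
  · rfl

theorem isStandardExp_tailExp [NeZero p] (j : Fin n) : IsStandardExp p k (tailExp M j) := by
  intro m
  unfold tailExp leadDeg
  split_ifs with hj hm hm
  · simp [toExp, hM _ m hm]
  · exact ZMod.val_lt _
  · exact one_pos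
  · exact Nat.pos_of_neZero p

theorem isLeadExp_codeBasis {K : Type*} [CommRing K] [Nontrivial K] [NeZero p] (j : Fin n) :
    IsLeadExp lexLe (codeBasis M K j) (Finsupp.single j (leadDeg p k j)) :=
  isLeadExp_monomial_sub_monomial
    (toLex_lt_toLex_single (fun _ hm => tailExp_apply_of_le hM hm) (leadDeg_pos j))

theorem coeff_codeBasis_of_isLeadExp {K : Type*} [CommRing K] [Nontrivial K] [NeZero p]
    {j : Fin n} {d : Fin n →₀ ℕ} (hd : IsLeadExp lexLe (codeBasis M K j) d) :
    coeff d (codeBasis M K j) = 1 := by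
  rw [← (isLeadExp_codeBasis hM j).unique hd]
  exact coeff_monomial_sub_monomial_self fun h =>
    not_single_leadDeg_le_of_isStandardExp (isStandardExp_tailExp hM j) j (h ▸ le_rfl)

theorem not_single_leadDeg_le_of_mem_support_codeBasis {K : Type*} [CommRing K] [NeZero p]
    {j j' : Fin n} (hjj' : j ≠ j') {e : Fin n →₀ ℕ} (he : e ∈ (codeBasis M K j').support) :
    ¬ Finsupp.single j (leadDeg p k j) ≤ e := by
  rcases mem_support_monomial_sub_monomial he with rfl | rfl
  · simpa [Finsupp.single_le_iff, hjj'] using (leadDeg_pos j).ne'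
  · exact not_single_leadDeg_le_of_isStandardExp (isStandardExp_tailExp hM j') j

end StandardForm

section GroupAlgebra

variable {p n k : ℕ} (M : Fin k → Fin n → ZMod p)

noncomputable def pivotImage (j : Fin n) : Fin n → ZMod p :=
  if h : (j : ℕ) < k then M ⟨j, h⟩ else Pi.single j 1

noncomputable def normalWord : (Fin n →₀ ℕ) →ₗ[ℕ] (Fin n → ZMod p) :=
  Finsupp.linearCombination ℕ (pivotImage M)

noncomputable def toGroupAlgebra (K : Type*) [CommSemiring K] :
    MvPolynomial (Fin n) K →ₐ[K] AddMonoidAlgebra K (Fin n → ZMod p) :=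
  AddMonoidAlgebra.mapDomainAlgHom K K (normalWord M).toAddMonoidHom

variable {M}

theorem normalWord_apply (e : Fin n →₀ ℕ) (m : Fin n) :
    normalWord M e m = ∑ t, e t • pivotImage M t m := by
  simp [normalWord, Finsupp.linearCombination_apply, Finsupp.sum_fintype]

theorem normalWord_apply_of_forall_lt_eq_zero {e : Fin n →₀ ℕ}
    (he : ∀ t : Fin n, (t : ℕ) < k → e t = 0) {m : Fin n} (hm : k ≤ (m : ℕ)) :
    normalWord M e m = e m := by
  rw [normalWord_apply, Finset.sum_eq_single m]
  · simp [pivotImage, not_lt.2 hm]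
  · intro t _ htm
    by_cases ht : (t : ℕ) < k
    · simp [he t ht]
    · simp [pivotImage, ht, htm.symm]
  · simp

theorem normalWord_single (j : Fin n) (x : ℕ) :
    normalWord M (Finsupp.single j x) = x • pivotImage M j :=
  Finsupp.linearCombination_single ℕ x j

theorem toGroupAlgebra_monomial {K : Type*} [CommSemiring K] (e : Fin n →₀ ℕ) (c : K) :
    toGroupAlgebra M K (monomial e c) = AddMonoidAlgebra.single (normalWord M e) c := by
  simp [toGroupAlgebra, monomial, AddMonoidAlgebra.mapDomain]

variable (hM : ∀ (i : Fin k) (j : Fin n), (j : ℕ) < k → M i j = 0)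
include hM

theorem normalWord_apply_of_lt (e : Fin n →₀ ℕ) {m : Fin n} (hm : (m : ℕ) < k) :
    normalWord M e m = 0 := by
  rw [normalWord_apply]
  refine Finset.sum_eq_zero fun t _ => ?_
  by_cases ht : (t : ℕ) < k
  · simp [pivotImage, ht, hM _ m hm]
  · simp [pivotImage, ht, show m ≠ t by rintro rfl; exact ht hm]

theorem toLex_toExp_normalWord_le [NeZero p] (e : Fin n →₀ ℕ) :
    toLex (toExp (normalWord M e)) ≤ toLex e := by
  by_cases he : ∀ t : Fin n, (t : ℕ) < k → e t = 0
  · refine Finsupp.toLex_monotone fun m => ?_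
    by_cases hm : (m : ℕ) < k
    · simp [toExp, normalWord_apply_of_lt hM e hm]
    · simpa [toExp, normalWord_apply_of_forall_lt_eq_zero he (not_lt.1 hm)] using
        Nat.mod_le _ _
  · push Not at he
    obtain ⟨i, ⟨hik, hei⟩, hmin⟩ :=
      WellFounded.has_min wellFounded_lt {t : Fin n | (t : ℕ) < k ∧ e t ≠ 0} he
    refine le_of_lt (Finsupp.lex_def.2 ⟨i, fun m hmi => ?_, ?_⟩)
    · have hmk : (m : ℕ) < k := lt_trans hmi hik
      have hem : e m = 0 := by_contra fun h => hmin m ⟨hmk, h⟩ hmi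
      simp [toExp, normalWord_apply_of_lt hM e hmk, hem]
    · simpa [toExp, normalWord_apply_of_lt hM e hik] using Nat.pos_of_ne_zero hei

theorem toExp_normalWord_of_isStandardExp [NeZero p] {d : Fin n →₀ ℕ}
    (hd : IsStandardExp p k d) : toExp (normalWord M d) = d := by
  have hhead : ∀ t : Fin n, (t : ℕ) < k → d t = 0 := fun t ht => by
    simpa [leadDeg, ht] using hd t
  ext m
  by_cases hm : (m : ℕ) < k
  · simp [toExp, normalWord_apply_of_lt hM d hm, hhead m hm]
  · have hdm : d m < p := by simpa [leadDeg, hm] using hd m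
    simp [toExp, normalWord_apply_of_forall_lt_eq_zero hhead (not_lt.1 hm), Nat.mod_eq_of_lt hdm]

theorem normalWord_toExp [NeZero p] {c : Fin n → ZMod p}
    (hc : ∀ t : Fin n, (t : ℕ) < k → c t = 0) : normalWord M (toExp c) = c := by
  funext m
  by_cases hm : (m : ℕ) < k
  · rw [normalWord_apply_of_lt hM _ hm, hc m hm]
  · rw [normalWord_apply_of_forall_lt_eq_zero (fun t ht => by simp [toExp, hc t ht])
      (not_lt.1 hm)]
    simp [toExp]

theorem toGroupAlgebra_codeBasis [NeZero p] {K : Type*} [CommRing K] (j : Fin n) :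
    toGroupAlgebra M K (codeBasis M K j) = 0 := by
  rw [codeBasis, map_sub, toGroupAlgebra_monomial, toGroupAlgebra_monomial, normalWord_single,
    sub_eq_zero]
  congr 1
  unfold tailExp leadDeg pivotImage
  split_ifs with hj
  · rw [one_smul, normalWord_toExp hM (hM _)]
  · ext m
    simp

theorem not_isLeadExp_of_toGroupAlgebra_eq_zero [NeZero p] {K : Type*} [CommSemiring K]
    {f : MvPolynomial (Fin n) K} (hf : toGroupAlgebra M K f = 0) {d : Fin n →₀ ℕ}
    (hd : IsStandardExp p k d) : ¬ IsLeadExp lexLe f d := by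
  rintro ⟨hdf, hmax⟩
  have hcoeff : (toGroupAlgebra M K f).coeff (normalWord M d) = coeff d f := by
    rw [f.as_sum, map_sum, AddMonoidAlgebra.coeff_sum, Finsupp.finsetSum_apply,
      Finset.sum_eq_single d]
    · simp [toGroupAlgebra_monomial]
    · intro e he hed
      rw [toGroupAlgebra_monomial, AddMonoidAlgebra.coeff_single, Finsupp.single_apply, if_neg]
      intro hv
      have hle : toLex d ≤ toLex e := by
        simpa [hv, toExp_normalWord_of_isStandardExp hM hd] using
          toLex_toExp_normalWord_le hM e
      exact hed (toLex.injective (le_antisymm (hmax e he) hle))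
    · exact fun h => absurd hdf h
  exact mem_support_iff.1 hdf (by rw [← hcoeff, hf]; rfl)

theorem exists_isLeadExp_codeBasis_le [NeZero p] {K : Type*} [CommRing K] [Nontrivial K]
    {f : MvPolynomial (Fin n) K} (hf : f ∈ Ideal.span (Set.range (codeBasis M K)))
    {d : Fin n →₀ ℕ} (hd : IsLeadExp lexLe f d) :
    ∃ b ∈ Set.range (codeBasis M K), ∃ d', IsLeadExp lexLe b d' ∧ d' ≤ d := by
  by_cases hstd : IsStandardExp p k d
  · have hker : Ideal.span (Set.range (codeBasis M K)) ≤ RingHom.ker (toGroupAlgebra M K) :=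
      Ideal.span_le.2 (Set.range_subset_iff.2 (toGroupAlgebra_codeBasis hM))
    exact absurd hd (not_isLeadExp_of_toGroupAlgebra_eq_zero hM (hker hf) hstd)
  · obtain ⟨j, hj⟩ := exists_single_leadDeg_le_of_not_isStandardExp hstd
    exact ⟨_, ⟨j, rfl⟩, _, isLeadExp_codeBasis hM j, hj⟩

end GroupAlgebra

section CodeIdeal

variable {p n k : ℕ} {K : Type*} [Field K] {M : Fin k → Fin n → ZMod p}
  {g : Fin k → Fin n → ZMod p} {C : Submodule (ZMod p) (Fin n → ZMod p)}

variable (hg : ∀ (i : Fin k) (j : Fin n), g i j = (if (j : ℕ) = (i : ℕ) then 1 else 0) - M i j)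
include hg

theorem eq_single_sub (hk : k ≤ n) (i : Fin k) : g i = Pi.single (Fin.castLE hk i) 1 - M i := by
  funext m
  simp [hg, Pi.single_apply, Fin.ext_iff]

variable (hC : C = Submodule.span (ZMod p) (Set.range g))
include hC

theorem codeBasis_mem_codeIdeal [Fact (1 < p)] (hk : k ≤ n) (j : Fin n) :
    codeBasis M K j ∈ codeIdeal p K C := by
  refine Ideal.subset_span ?_
  by_cases hj : (j : ℕ) < k
  · obtain ⟨i, rfl⟩ : ∃ i : Fin k, Fin.castLE hk i = j := ⟨⟨j, hj⟩, rfl⟩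
    refine Or.inl ⟨Pi.single (Fin.castLE hk i) 1, M i, ?_, ?_⟩
    · rw [← eq_single_sub hg hk, hC]
      exact Submodule.subset_span ⟨i, rfl⟩
    · simp [codeBasis, leadDeg, tailExp, toExp_single]
  · exact Or.inr ⟨j, by simp [codeBasis, leadDeg, tailExp, hj, X_pow_eq_monomial]⟩

theorem codeIdeal_le_ker [Fact (1 < p)] (hk : k ≤ n)
    (hM : ∀ (i : Fin k) (j : Fin n), (j : ℕ) < k → M i j = 0) {R : Type*} [CommRing R]
    (f : MvPolynomial (Fin n) K →+* R) (hf : ∀ j, f (codeBasis M K j) = 0) :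
    codeIdeal p K C ≤ RingHom.ker f := by
  set u : Fin n → R := fun j => f (X j)
  have hpivot : ∀ i : Fin k, u (Fin.castLE hk i) = powVal u (M i) := fun i => by
    simpa [codeBasis, leadDeg, tailExp, map_monomial_toExp, sub_eq_zero, ← X_pow_eq_monomial]
      using hf (Fin.castLE hk i)
  have hpow_tail : ∀ j : Fin n, k ≤ (j : ℕ) → u j ^ p = 1 := fun j hj => by
    simpa [codeBasis, leadDeg, tailExp, not_lt.2 hj, sub_eq_zero, ← X_pow_eq_monomial]
      using hf j
  have hu : ∀ j, u j ^ p = 1 := by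
    intro j
    by_cases hj : (j : ℕ) < k
    · obtain ⟨i, rfl⟩ : ∃ i : Fin k, Fin.castLE hk i = j := ⟨⟨j, hj⟩, rfl⟩
      rw [hpivot, powVal, ← Finset.prod_pow]
      refine Finset.prod_eq_one fun t _ => ?_
      by_cases ht : (t : ℕ) < k
      · simp [hM i t ht]
      · rw [pow_right_comm, hpow_tail t (not_lt.1 ht), one_pow]
    · exact hpow_tail j (not_lt.1 hj)
  have hcode : ∀ c ∈ C, powVal u c = 1 := by
    rw [hC]
    refine fun c hc => powVal_eq_one_of_mem_span hu ?_ hc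
    rintro _ ⟨i, rfl⟩
    rw [eq_single_sub hg hk, ← powVal_eq_powVal_iff hu, powVal_single, hpivot]
  refine Ideal.span_le.2 ?_
  rintro _ (⟨a, b, hab, rfl⟩ | ⟨j, rfl⟩)
  · rw [SetLike.mem_coe, RingHom.mem_ker, map_sub, map_monomial_toExp, map_monomial_toExp,
      sub_eq_zero]
    exact (powVal_eq_powVal_iff hu).2 (hcode _ hab)
  · rw [SetLike.mem_coe, RingHom.mem_ker, map_sub, map_pow, map_one, sub_eq_zero]
    exact hu j

end CodeIdeal

/-- for a code C over F_p with standard generator matrix whose rows are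
g_i = e_i − m_i (m_i supported on coordinates k+1,…,n), the set
{x_i − x^{m_i} : 1 ≤ i ≤ k} ∪ {x_i^p − 1 : k+1 ≤ i ≤ n} generates I(C) and is the
reduced Gröbner basis of I(C) w.r.t. the lex order x_1 ≻ … ≻ x_n. -/
theorem stmt_4 (p : ℕ) (hp : p.Prime) (K : Type*) [Field K] (n k : ℕ) (hk : k ≤ n)
    (M : Fin k → Fin n → ZMod p) (hM : ∀ (i : Fin k) (j : Fin n), (j : ℕ) < k → M i j = 0)
    (g : Fin k → Fin n → ZMod p)
    (hg : ∀ (i : Fin k) (j : Fin n), g i j = (if (j : ℕ) = (i : ℕ) then 1 else 0) - M i j)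
    (C : Submodule (ZMod p) (Fin n → ZMod p))
    (hC : C = Submodule.span (ZMod p) (Set.range g))
    (G : Set (MvPolynomial (Fin n) K))
    (hG : G = {f | ∃ i : Fin k,
                f = X (Fin.castLE hk i) - monomial (toExp (M i)) (1 : K)} ∪
              {f | ∃ i : Fin n, k ≤ (i : ℕ) ∧ f = X i ^ p - 1}) :
    Ideal.span G = codeIdeal p K C ∧
      IsReducedGroebnerBasis lexLe G (codeIdeal p K C) := by
  have : Fact p.Prime := ⟨hp⟩
  obtain rfl : G = Set.range (codeBasis M K) := hG.trans (range_codeBasis K hk).symm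
  have hspan : Ideal.span (Set.range (codeBasis M K)) = codeIdeal p K C := by
    refine le_antisymm (Ideal.span_le.2 (Set.range_subset_iff.2
      (codeBasis_mem_codeIdeal hg hC hk))) ?_
    simpa using codeIdeal_le_ker hg hC hk hM (Ideal.Quotient.mk _)
      fun j => Ideal.Quotient.eq_zero_iff_mem.2 (Ideal.subset_span (Set.mem_range_self j))
  refine ⟨hspan, ?_, ?_, ?_⟩
  · rw [← hspan]
    exact isGroebnerBasis_of_forall_isLeadExp Ideal.subset_span
      fun f hf d hd => exists_isLeadExp_codeBasis_le hM hf hd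
  · rintro _ ⟨j, rfl⟩ d hd
    exact coeff_codeBasis_of_isLeadExp hM hd
  · rintro _ ⟨j, rfl⟩ _ ⟨j', rfl⟩ hne d hd e he
    rw [← (isLeadExp_codeBasis hM j).unique hd]
    exact not_single_leadDeg_le_of_mem_support_codeBasis hM (fun h => hne (congrArg _ h)) he
end

section
/- Let C be a linear code of length n over F_p and let ≻ be any monomial order on K[x_1,…,x_n]. The standard monomials of I(C) (monomials not in the leading ideal lt_≻(I(C))) are in bijection with the cosets of F_p^n / C: each coset contains the exponent of exactly one standard monomial. -/
open MvPolynomial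

/-!
Dividing by `I(C)` with respect to the monomial order (well founded by Dickson's lemma) rewrites
`x^w` modulo `I(C)` as a combination of standard monomials. The ring map
`K[x] → K[F_p^n / C]`, `x^u ↦ [u mod p + C]`, kills `I(C)`, so one of these standard monomials
has its exponent in the coset of `w`. Conversely, two distinct standard exponents in one coset give
a binomial `x^u - x^v ∈ I(C)` whose leading monomial is one of them, which is absurd.
-/

namespace MonomialOrder

variable {σ K : Type*} [Field K] (m : MonomialOrder σ)

def IsStandard (I : Ideal (MvPolynomial σ K)) (u : σ →₀ ℕ) : Prop :=
  ∀ f ∈ I, f ≠ 0 → ¬ m.degree f ≤ u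

theorem exists_sub_mem_forall_isStandard (I : Ideal (MvPolynomial σ K)) (f : MvPolynomial σ K) :
    ∃ r, f - r ∈ I ∧ ∀ c ∈ r.support, m.IsStandard I c := by
  obtain ⟨g, r, rfl, -, hr⟩ := m.div_set (B := {b | b ∈ I ∧ b ≠ 0})
    (fun b hb => (m.leadingCoeff_ne_zero_iff.2 hb.2).isUnit) f
  refine ⟨r, ?_, fun c hc b hb hb0 => hr c hc b ⟨hb, hb0⟩⟩
  rw [add_sub_cancel_right, Finsupp.linearCombination_apply]
  exact Submodule.finsuppSum_mem _ _ _ _ fun b _ => I.smul_mem _ b.2.1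

theorem eq_of_isStandard_of_monomial_sub_mem {I : Ideal (MvPolynomial σ K)} {u v : σ →₀ ℕ}
    (hu : m.IsStandard I u) (hv : m.IsStandard I v) (huv : monomial u 1 - monomial v 1 ∈ I) :
    u = v := by
  classical
  wlog hlt : m.toSyn v < m.toSyn u generalizing u v
  · rcases (not_lt.1 hlt).lt_or_eq with hlt | heq
    · exact (this hv hu (by simpa using I.neg_mem huv) hlt).symm
    · exact m.toSyn.injective heq
  have hdeg_monomial (w : σ →₀ ℕ) : m.degree (monomial w (1 : K)) = w := by
    rw [m.degree_monomial, if_neg one_ne_zero]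
  have hdeg : m.degree (monomial u (1 : K) - monomial v 1) = u := by
    rw [m.degree_sub_of_lt, hdeg_monomial]
    rwa [hdeg_monomial, hdeg_monomial]
  have hne : monomial u (1 : K) - monomial v 1 ≠ 0 :=
    sub_ne_zero.2 ((monomial_left_injective one_ne_zero).ne (ne_of_apply_ne _ hlt.ne'))
  exact absurd hdeg.le (hu _ huv hne)

end MonomialOrder

theorem monomial_one_mem_leadIdeal_iff {σ K : Type*} [Field K]
    (le : (σ →₀ ℕ) → (σ →₀ ℕ) → Prop) (I : Ideal (MvPolynomial σ K)) (u : σ →₀ ℕ) :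
    monomial u (1 : K) ∈ leadIdeal le I ↔ ∃ f ∈ I, ∃ d, IsLeadExp le f d ∧ d ≤ u := by
  classical
  have hset : {q | ∃ f ∈ I, ∃ d, IsLeadExp le f d ∧ q = monomial d (1 : K)}
      = (monomial · 1) '' {d | ∃ f ∈ I, IsLeadExp le f d} := by
    ext q
    constructor
    · rintro ⟨f, hf, d, hd, rfl⟩; exact ⟨d, ⟨f, hf, hd⟩, rfl⟩
    · rintro ⟨d, ⟨f, hf, hd⟩, rfl⟩; exact ⟨f, hf, d, hd, rfl⟩
  rw [leadIdeal, hset, mem_ideal_span_monomial_image, support_monomial, if_neg one_ne_zero]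
  simp only [Finset.mem_singleton, forall_eq, Set.mem_ofPred_eq]
  constructor
  · rintro ⟨d, ⟨f, hf, hd⟩, hdu⟩; exact ⟨f, hf, d, hd, hdu⟩
  · rintro ⟨f, hf, d, hd, hdu⟩; exact ⟨d, ⟨f, hf, hd⟩, hdu⟩

structure IsMonomialOrder {σ : Type*} (le : (σ →₀ ℕ) → (σ →₀ ℕ) → Prop) : Prop where
  trans : ∀ a b c, le a b → le b c → le a c
  antisymm : ∀ a b, le a b → le b a → a = b
  total : ∀ a b, le a b ∨ le b a
  zero_le : ∀ a, le 0 a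
  add_le_add_left : ∀ a b, le a b → ∀ c, le (a + c) (b + c)

def RelSyn {σ : Type*} (_le : (σ →₀ ℕ) → (σ →₀ ℕ) → Prop) : Type _ := σ →₀ ℕ

noncomputable instance {σ : Type*} (le : (σ →₀ ℕ) → (σ →₀ ℕ) → Prop) :
    AddCommMonoid (RelSyn le) :=
  inferInstanceAs (AddCommMonoid (σ →₀ ℕ))

namespace IsMonomialOrder

variable {σ : Type*} {le : (σ →₀ ℕ) → (σ →₀ ℕ) → Prop} (h : IsMonomialOrder le)
include h

theorem rel_of_le {a b : σ →₀ ℕ} (hab : a ≤ b) : le a b := by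
  simpa [tsub_add_cancel_of_le hab] using h.add_le_add_left 0 (b - a) (h.zero_le _) a

protected noncomputable abbrev linearOrder : LinearOrder (RelSyn le) where
  le := le
  le_refl a := (h.total a a).elim id id
  le_trans := h.trans
  le_antisymm := h.antisymm
  le_total := h.total
  toDecidableLE := Classical.decRel _

noncomputable def toMonomialOrder [Finite σ] : MonomialOrder σ :=
  letI := h.linearOrder
  haveI : IsOrderedAddMonoid (RelSyn le) := { add_le_add_left := h.add_le_add_left }
  have hmono : Monotone (α := σ →₀ ℕ) (β := RelSyn le) id := fun _ _ => h.rel_of_le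
  haveI : WellQuasiOrderedLE (RelSyn le) :=
    hmono.wellQuasiOrderedLE_of_wellQuasiOrderedLE_of_surjective Function.surjective_id
  { syn := RelSyn le
    toSyn := AddEquiv.refl _
    toSyn_monotone := hmono }

theorem isLeadExp_iff [Finite σ] {R : Type*} [CommSemiring R] {f : MvPolynomial σ R}
    {d : σ →₀ ℕ} : IsLeadExp le f d ↔ f ≠ 0 ∧ h.toMonomialOrder.degree f = d := by
  constructor
  · rintro ⟨hd, hmax⟩
    have hf : f ≠ 0 := by rintro rfl; simp at hd
    exact ⟨hf, h.antisymm _ _ (hmax _ (h.toMonomialOrder.degree_mem_support hf))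
      (h.toMonomialOrder.le_degree hd)⟩
  · rintro ⟨hf, rfl⟩
    exact ⟨h.toMonomialOrder.degree_mem_support hf, fun e he => h.toMonomialOrder.le_degree he⟩

theorem monomial_one_mem_leadIdeal_iff_not_isStandard [Finite σ] {K : Type*} [Field K]
    {I : Ideal (MvPolynomial σ K)} {u : σ →₀ ℕ} :
    monomial u (1 : K) ∈ leadIdeal le I ↔ ¬ h.toMonomialOrder.IsStandard I u := by
  simp only [monomial_one_mem_leadIdeal_iff, h.isLeadExp_iff, MonomialOrder.IsStandard]
  grind

end IsMonomialOrder

section CodeIdeal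

variable {σ : Type*} (p : ℕ)

def reduceExp : (σ →₀ ℕ) →+ (σ → ZMod p) where
  toFun u i := u i
  map_zero' := by ext; simp
  map_add' _ _ := by ext; simp

theorem reduceExp_toExp [NeZero p] {n : ℕ} (a : Fin n → ZMod p) :
    reduceExp p (toExp a) = a := by
  ext i
  simp [reduceExp, toExp]

variable (K : Type*) [Field K] {n : ℕ} (C : Submodule (ZMod p) (Fin n → ZMod p))

theorem mk_X_pow_eq_one (i : Fin n) : Ideal.Quotient.mk (codeIdeal p K C) (X i) ^ p = 1 := by
  rw [← map_pow, ← map_one (Ideal.Quotient.mk _), Ideal.Quotient.eq]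
  exact Ideal.subset_span (Or.inr ⟨i, rfl⟩)

theorem mk_monomial_eq_mk_monomial_toExp [NeZero p] (u : Fin n →₀ ℕ) :
    Ideal.Quotient.mk (codeIdeal p K C) (monomial u 1) =
      Ideal.Quotient.mk (codeIdeal p K C) (monomial (toExp (reduceExp p u)) 1) := by
  have hprod (v : Fin n →₀ ℕ) : monomial v (1 : K) = ∏ i, X i ^ v i := by
    rw [monomial_eq, C_1, one_mul]
    exact Finsupp.prod_fintype _ _ fun i => pow_zero _
  simp only [hprod, map_prod, map_pow]
  refine Finset.prod_congr rfl fun i _ => ?_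
  have hred : toExp (reduceExp p u) i = u i % p := by simp [toExp, reduceExp, ZMod.val_natCast]
  rw [hred]
  conv_lhs => rw [← Nat.mod_add_div (u i) p, pow_add, pow_mul, mk_X_pow_eq_one,
    one_pow, mul_one]

theorem monomial_sub_monomial_mem_codeIdeal [NeZero p] {a b : Fin n →₀ ℕ}
    (hab : reduceExp p a - reduceExp p b ∈ C) :
    monomial a (1 : K) - monomial b 1 ∈ codeIdeal p K C := by
  rw [← Ideal.Quotient.eq, mk_monomial_eq_mk_monomial_toExp p K C a,
    mk_monomial_eq_mk_monomial_toExp p K C b, Ideal.Quotient.eq]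
  exact Ideal.subset_span (Or.inl ⟨_, _, hab, rfl⟩)

noncomputable def cosetRingHom :
    MvPolynomial (Fin n) K →+* AddMonoidAlgebra K ((Fin n → ZMod p) ⧸ C) :=
  AddMonoidAlgebra.mapDomainRingHom K (C.mkQ.toAddMonoidHom.comp (reduceExp p))

theorem cosetRingHom_monomial (v : Fin n →₀ ℕ) (c : K) :
    cosetRingHom p K C (monomial v c) =
      AddMonoidAlgebra.single (Submodule.Quotient.mk (reduceExp p v)) c :=
  AddMonoidAlgebra.mapDomain_single

theorem cosetRingHom_monomial_sub_monomial {a b : Fin n →₀ ℕ}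
    (hab : reduceExp p a - reduceExp p b ∈ C) :
    cosetRingHom p K C (monomial a 1 - monomial b 1) = 0 := by
  rw [map_sub, cosetRingHom_monomial, cosetRingHom_monomial, (Submodule.Quotient.eq C).2 hab,
    sub_self]

theorem codeIdeal_le_ker_cosetRingHom [NeZero p] :
    codeIdeal p K C ≤ RingHom.ker (cosetRingHom p K C) := by
  rw [codeIdeal, Ideal.span_le]
  rintro q (⟨a, b, hab, rfl⟩ | ⟨i, rfl⟩)
  · rw [← reduceExp_toExp p a, ← reduceExp_toExp p b] at hab
    exact cosetRingHom_monomial_sub_monomial p K C hab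
  · have hred : reduceExp p (Finsupp.single i p) = 0 := by
      ext j
      simp [reduceExp, Finsupp.single_apply]
    rw [X_pow_eq_monomial, one_def]
    exact cosetRingHom_monomial_sub_monomial p K C (by simp [hred])

theorem exists_mem_support_sub_mem_of_monomial_sub_mem [NeZero p] {u : Fin n →₀ ℕ}
    {r : MvPolynomial (Fin n) K} (hur : monomial u 1 - r ∈ codeIdeal p K C) :
    ∃ v ∈ r.support, reduceExp p v - reduceExp p u ∈ C := by
  classical
  have himage : cosetRingHom p K C r =
      AddMonoidAlgebra.single (Submodule.Quotient.mk (reduceExp p u)) 1 := by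
    rw [← cosetRingHom_monomial, eq_comm, ← sub_eq_zero, ← map_sub]
    exact codeIdeal_le_ker_cosetRingHom p K C hur
  have hmem : Submodule.Quotient.mk (reduceExp p u) ∈ (cosetRingHom p K C r).coeff.support := by
    simp [himage]
  obtain ⟨v, hv, hvu⟩ := Finset.mem_image.1 (Finsupp.mapDomain_support hmem)
  exact ⟨v, hv, (Submodule.Quotient.eq C).1 hvu⟩

end CodeIdeal

theorem MonomialOrder.existsUnique_isStandard_codeIdeal (p : ℕ) [NeZero p] (K : Type*) [Field K]
    {n : ℕ} (C : Submodule (ZMod p) (Fin n → ZMod p)) (m : MonomialOrder (Fin n))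
    (w : Fin n → ZMod p) :
    ∃! u, m.IsStandard (codeIdeal p K C) u ∧ reduceExp p u - w ∈ C := by
  obtain ⟨r, hr, hstd⟩ :=
    m.exists_sub_mem_forall_isStandard (codeIdeal p K C) (monomial (toExp w) 1)
  obtain ⟨v, hv, hvw⟩ := exists_mem_support_sub_mem_of_monomial_sub_mem p K C hr
  rw [reduceExp_toExp] at hvw
  refine ⟨v, ⟨hstd v hv, hvw⟩, fun u ⟨hu, huw⟩ => ?_⟩
  refine m.eq_of_isStandard_of_monomial_sub_mem hu (hstd v hv)
    (monomial_sub_monomial_mem_codeIdeal p K C ?_)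
  simpa using C.sub_mem huw hvw

theorem stmt_16_general (p : ℕ) (hp : p.Prime) (K : Type*) [Field K] (n : ℕ)
    (C : Submodule (ZMod p) (Fin n → ZMod p))
    (le : (Fin n →₀ ℕ) → (Fin n →₀ ℕ) → Prop)
    (htrans : Transitive le)
    (hantisymm : AntiSymmetric le) (htotal : Total le)
    (hzero : ∀ a : Fin n →₀ ℕ, le 0 a)
    (hadd : ∀ a b c : Fin n →₀ ℕ, le a b → le (a + c) (b + c)) :
    ∀ w : Fin n → ZMod p,
      ∃! u : Fin n →₀ ℕ,
        monomial u (1 : K) ∉ leadIdeal le (codeIdeal p K C) ∧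
          (fun i => ((u i : ZMod p))) - w ∈ C := by
  have : NeZero p := ⟨hp.ne_zero⟩
  have hle : IsMonomialOrder le :=
    ⟨fun _ _ _ => @htrans _ _ _, fun _ _ => @hantisymm _ _, htotal, hzero,
      fun a b hab c => hadd a b c hab⟩
  intro w
  simp only [hle.monomial_one_mem_leadIdeal_iff_not_isStandard, not_not]
  exact hle.toMonomialOrder.existsUnique_isStandard_codeIdeal p K C w

/-- for any monomial order, the standard monomials of I(C) are in
bijection with the cosets of F_p^n / C: each coset contains the exponent of
exactly one standard monomial. -/
theorem stmt_16 (p : ℕ) (hp : p.Prime) (K : Type*) [Field K] (n : ℕ)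
    (C : Submodule (ZMod p) (Fin n → ZMod p))
    (le : (Fin n →₀ ℕ) → (Fin n →₀ ℕ) → Prop)
    (hrefl : Reflexive le) (htrans : Transitive le)
    (hantisymm : AntiSymmetric le) (htotal : Total le)
    (hzero : ∀ a : Fin n →₀ ℕ, le 0 a)
    (hadd : ∀ a b c : Fin n →₀ ℕ, le a b → le (a + c) (b + c)) :
    ∀ w : Fin n → ZMod p,
      ∃! u : Fin n →₀ ℕ,
        monomial u (1 : K) ∉ leadIdeal le (codeIdeal p K C) ∧
          (fun i => ((u i : ZMod p))) - w ∈ C :=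
  stmt_16_general p hp K n C le htrans hantisymm htotal hzero hadd
end
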